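/- Let e := (q₁ + q₂)/√2 in ℂ², B̃₁ := ee* =: C̃₁, B̃₂ := 2q₁q₁* + q₂q₂*, C̃₂ := q₁q₁*. Then the sum of the 2 largest eigenvalues of B̃₁^↓ ⊗ C̃₁ + B̃₂^↓ ⊗ C̃₂ is strictly less than the sum of the 2 largest eigenvalues of B̃₁ ⊗ C̃₁ + B̃₂ ⊗ C̃₂ (their difference is less than −0.05). Hence B̃₁ ⊗ C̃₁ + B̃₂ ⊗ C̃₂ is not majorized by B̃₁^↓ ⊗ C̃₁ + B̃₂^↓ ⊗ C̃₂. -/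

import Mathlib

/-! The characteristic polynomial of the unsorted sum is `x⁴ - 4x³ + 17/4 x² - x`; its sign
changes put eigenvalues in `(1.264, 1.265)` and `(2.406, 2.408)`, so its `s₂` exceeds `3.67`.
That of the sorted sum is `x (x - 1) (x² - 3x + 1)`, with roots `0, 1, (3 ± √5)/2`. Its eigenvalues
are nonnegative with trace `4`, so `(3 + √5)/2` is simple and `s₂ ≤ 1 + (3 + √5)/2 < 3.619`. -/

open Matrix Kronecker

/-- Sum of the `k` largest values of `f` (as the sup of sums over `k`-subsets). -/
noncomputable def sk {ι : Type*} [Fintype ι] (f : ι → ℝ) (k : ℕ) : ℝ :=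
  sSup {x | ∃ S : Finset ι, S.card = k ∧ x = ∑ i ∈ S, f i}

section TopSums

variable {ι : Type*} [Fintype ι]

theorem sum_le_sk (f : ι → ℝ) {S : Finset ι} {k : ℕ} (hS : S.card = k) :
    ∑ i ∈ S, f i ≤ sk f k := by
  refine le_csSup ?_ ⟨S, hS, rfl⟩
  refine (Set.finite_range fun T : Finset ι => ∑ i ∈ T, f i).subset ?_ |>.bddAbove
  rintro _ ⟨T, -, rfl⟩
  exact ⟨T, rfl⟩

theorem sk_le_of_forall_card_eq (f : ι → ℝ) {k : ℕ} (hk : k ≤ Fintype.card ι) {c : ℝ}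
    (h : ∀ S : Finset ι, S.card = k → ∑ i ∈ S, f i ≤ c) : sk f k ≤ c := by
  obtain ⟨S₀, -, hS₀⟩ := Finset.exists_subset_card_eq (s := Finset.univ) hk
  refine csSup_le ⟨_, S₀, hS₀, rfl⟩ ?_
  rintro _ ⟨S, hS, rfl⟩
  exact h S hS

end TopSums

theorem exists_mem_Ioo_of_prod_mul_prod_neg {ι : Type*} [Fintype ι] (f : ι → ℝ) {a b : ℝ}
    (hab : a < b) (h : (∏ i, (a - f i)) * ∏ i, (b - f i) < 0) : ∃ i, f i ∈ Set.Ioo a b := by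
  by_contra! hout
  simp only [Set.mem_Ioo, not_and, not_lt] at hout
  refine h.not_ge ?_
  rw [← Finset.prod_mul_distrib]
  refine Finset.prod_nonneg fun i _ => ?_
  rcases le_or_gt (f i) a with hle | hgt
  · exact mul_nonneg (by linarith) (by linarith)
  · exact mul_nonneg_of_nonpos_of_nonpos (by linarith) (by linarith [hout i hgt])

theorem Matrix.IsHermitian.prod_sub_eigenvalues {𝕜 n : Type*} [RCLike 𝕜] [Fintype n]
    [DecidableEq n] {A : Matrix n n 𝕜} (hA : A.IsHermitian) (x : ℝ) :
    ((∏ i, (x - hA.eigenvalues i) : ℝ) : 𝕜) = (scalar n (x : 𝕜) - A).det := by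
  rw [← eval_charpoly, hA.charpoly_eq, Polynomial.eval_prod]
  simp

/-- `B̃₁ ⊗ C̃₁ + B̃₂ ⊗ C̃₂`, with `B̃₁ = C̃₁ = ee*`, `B̃₂ = diag(2,1)`, `C̃₂ = diag(1,0)`. -/
noncomputable def unsortedSum : Matrix (Fin 2 × Fin 2) (Fin 2 × Fin 2) ℂ :=
  ((2 : ℂ)⁻¹ • !![1, 1; 1, 1]) ⊗ₖ ((2 : ℂ)⁻¹ • !![1, 1; 1, 1])
    + Matrix.diagonal ![(2 : ℂ), 1] ⊗ₖ Matrix.diagonal ![(1 : ℂ), 0]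

/-- `B̃₁^↓ ⊗ C̃₁ + B̃₂^↓ ⊗ C̃₂`, where `B̃₁^↓ = diag(1,0)` and `B̃₂^↓ = B̃₂`. -/
noncomputable def sortedSum : Matrix (Fin 2 × Fin 2) (Fin 2 × Fin 2) ℂ :=
  Matrix.diagonal ![(1 : ℂ), 0] ⊗ₖ ((2 : ℂ)⁻¹ • !![1, 1; 1, 1])
    + Matrix.diagonal ![(2 : ℂ), 1] ⊗ₖ Matrix.diagonal ![(1 : ℂ), 0]

theorem det_scalar_sub_unsortedSum (x : ℝ) :
    (scalar _ (x : ℂ) - unsortedSum).det = ((x ^ 4 - 4 * x ^ 3 + 17 / 4 * x ^ 2 - x : ℝ) : ℂ) := by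
  have hreindex : scalar _ (x : ℂ) - unsortedSum =
      (!![x - 9/4, -(1/4), -(1/4), -(1/4);
          -(1/4), x - 1/4, -(1/4), -(1/4);
          -(1/4), -(1/4), x - 5/4, -(1/4);
          -(1/4), -(1/4), -(1/4), x - 1/4] : Matrix (Fin 4) (Fin 4) ℂ).submatrix
        finProdFinEquiv finProdFinEquiv := by
    ext ⟨i, j⟩ ⟨k, l⟩
    fin_cases i <;> fin_cases j <;> fin_cases k <;> fin_cases l <;>
      norm_num [unsortedSum, finProdFinEquiv, Fin.ext_iff]
  rw [hreindex, det_submatrix_equiv_self, det_succ_row_zero]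
  simp [Fin.sum_univ_succ, det_fin_three, Fin.succAbove]
  ring

theorem det_scalar_sub_sortedSum (x : ℝ) :
    (scalar _ (x : ℂ) - sortedSum).det = ((x ^ 4 - 4 * x ^ 3 + 4 * x ^ 2 - x : ℝ) : ℂ) := by
  have hreindex : scalar _ (x : ℂ) - sortedSum =
      (!![x - 5/2, -(1/2), 0, 0;
          -(1/2), x - 1/2, 0, 0;
          0, 0, x - 1, 0;
          0, 0, 0, (x : ℂ)] : Matrix (Fin 4) (Fin 4) ℂ).submatrix
        finProdFinEquiv finProdFinEquiv := by
    ext ⟨i, j⟩ ⟨k, l⟩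
    fin_cases i <;> fin_cases j <;> fin_cases k <;> fin_cases l <;>
      norm_num [sortedSum, finProdFinEquiv, Fin.ext_iff]
  rw [hreindex, det_submatrix_equiv_self, det_succ_row_zero]
  simp [Fin.sum_univ_succ, det_fin_three, Fin.succAbove]
  ring

theorem trace_sortedSum : sortedSum.trace = 4 := by
  rw [trace, Fintype.sum_prod_type]
  norm_num [sortedSum, Fin.sum_univ_succ]

theorem lt_sk_unsortedSum (hA : unsortedSum.IsHermitian) : 3.67 < sk hA.eigenvalues 2 := by
  have hchar (x : ℝ) : ∏ i, (x - hA.eigenvalues i) = x ^ 4 - 4 * x ^ 3 + 17 / 4 * x ^ 2 - x :=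
    RCLike.ofReal_injective ((hA.prod_sub_eigenvalues x).trans (det_scalar_sub_unsortedSum x))
  obtain ⟨i, hi⟩ : ∃ i, hA.eigenvalues i ∈ Set.Ioo 1.264 1.265 :=
    exists_mem_Ioo_of_prod_mul_prod_neg _ (by norm_num) (by rw [hchar, hchar]; norm_num)
  obtain ⟨j, hj⟩ : ∃ j, hA.eigenvalues j ∈ Set.Ioo 2.406 2.408 :=
    exists_mem_Ioo_of_prod_mul_prod_neg _ (by norm_num) (by rw [hchar, hchar]; norm_num)
  have hij : i ≠ j := by
    rintro rfl
    linarith [hi.2, hj.1]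
  have := sum_le_sk hA.eigenvalues (Finset.card_pair hij)
  rw [Finset.sum_pair hij] at this
  linarith [hi.1, hj.1]

theorem eigenvalues_sortedSum (hA : sortedSum.IsHermitian) (i : Fin 2 × Fin 2) :
    0 ≤ hA.eigenvalues i ∧ (hA.eigenvalues i ≤ 1 ∨ hA.eigenvalues i = (3 + √5) / 2) := by
  set x := hA.eigenvalues i
  have hroot : x * (x - 1) * (x ^ 2 - 3 * x + 1) = 0 := by
    have hchar : ∏ k, (x - hA.eigenvalues k) = x ^ 4 - 4 * x ^ 3 + 4 * x ^ 2 - x :=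
      RCLike.ofReal_injective ((hA.prod_sub_eigenvalues x).trans (det_scalar_sub_sortedSum x))
    rw [Finset.prod_eq_zero (Finset.mem_univ i) (sub_self x)] at hchar
    linear_combination -hchar
  rcases mul_eq_zero.mp hroot with hlin | hquad
  · rcases mul_eq_zero.mp hlin with h0 | h1
    · exact ⟨h0.ge, .inl (by linarith)⟩
    · exact ⟨by linarith, .inl (by linarith)⟩
  · have hsq : (2 * x - 3) ^ 2 = √5 ^ 2 := by
      rw [Real.sq_sqrt (by norm_num)]
      linear_combination 4 * hquad
    have hsqrt5 : √5 < 3 := by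
      rw [Real.sqrt_lt' (by norm_num)]
      norm_num
    have h1 : 1 < √5 := by
      rw [Real.lt_sqrt (by norm_num)]
      norm_num
    rcases sq_eq_sq_iff_eq_or_eq_neg.mp hsq with hplus | hminus
    · exact ⟨by linarith [Real.sqrt_nonneg 5], .inr (by linarith)⟩
    · exact ⟨by linarith, .inl (by linarith)⟩

theorem sk_sortedSum_le (hA : sortedSum.IsHermitian) : sk hA.eigenvalues 2 ≤ (5 + √5) / 2 := by
  have htrace : ∑ i, hA.eigenvalues i = 4 := by
    refine RCLike.ofReal_injective (K := ℂ) ?_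
    rw [RCLike.ofReal_sum, ← hA.trace_eq_sum_eigenvalues, trace_sortedSum, RCLike.ofReal_ofNat]
  have hsqrt5 : 2 < √5 := by
    rw [Real.lt_sqrt (by norm_num)]
    norm_num
  refine sk_le_of_forall_card_eq _ (by simp) fun S hS => ?_
  obtain ⟨i, j, hij, rfl⟩ := Finset.card_eq_two.mp hS
  rw [Finset.sum_pair hij]
  have hpair : hA.eigenvalues i + hA.eigenvalues j ≤ 4 := by
    have := Finset.sum_le_sum_of_subset_of_nonneg (Finset.subset_univ {i, j})
      fun k _ _ => (eigenvalues_sortedSum hA k).1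
    rwa [Finset.sum_pair hij, htrace] at this
  rcases (eigenvalues_sortedSum hA i).2 with hi | hi <;>
    rcases (eigenvalues_sortedSum hA j).2 with hj | hj <;> linarith

/-- Counterexample to aligning only one factor: with `B̃₁ = C̃₁ = ee*` (`e = (q₁+q₂)/√2`),
`B̃₂ = diag(2,1)`, `C̃₂ = diag(1,0)` (so `B̃₁^↓ = diag(1,0)` and `B̃₂^↓ = B̃₂`),
`s₂(B̃₁^↓⊗C̃₁ + B̃₂^↓⊗C̃₂) - s₂(B̃₁⊗C̃₁ + B̃₂⊗C̃₂) < -0.05`; hence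
`B̃₁⊗C̃₁ + B̃₂⊗C̃₂` is not majorized by `B̃₁^↓⊗C̃₁ + B̃₂^↓⊗C̃₂`. -/
theorem stmt13
    (hA : (((2 : ℂ)⁻¹ • !![1, 1; 1, 1]) ⊗ₖ ((2 : ℂ)⁻¹ • !![1, 1; 1, 1])
      + Matrix.diagonal ![(2 : ℂ), 1] ⊗ₖ Matrix.diagonal ![(1 : ℂ), 0]).IsHermitian)
    (hA' : (Matrix.diagonal ![(1 : ℂ), 0] ⊗ₖ ((2 : ℂ)⁻¹ • !![1, 1; 1, 1])
      + Matrix.diagonal ![(2 : ℂ), 1] ⊗ₖ Matrix.diagonal ![(1 : ℂ), 0]).IsHermitian) :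
    sk hA'.eigenvalues 2 - sk hA.eigenvalues 2 < -0.05
    ∧ ¬ ((∀ k ≤ 4, sk hA.eigenvalues k ≤ sk hA'.eigenvalues k)
          ∧ sk hA.eigenvalues 4 = sk hA'.eigenvalues 4) := by
  have hsorted : sk hA'.eigenvalues 2 ≤ (5 + √5) / 2 := sk_sortedSum_le hA'
  have hunsorted : 3.67 < sk hA.eigenvalues 2 := lt_sk_unsortedSum hA
  have hsqrt5 : √5 < 2.237 := by
    rw [Real.sqrt_lt' (by norm_num)]
    norm_num
  refine ⟨by linarith, fun ⟨hle, _⟩ => ?_⟩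
  linarith [hle 2 (by norm_num)]
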